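/- The expectation of the shifted potential in the Gaussian ground state satisfies: for φ₀(t) = (√2 π)^{-1/4} e^{-t²/(2√2)}, one has ∫ φ₀(t)² (V(ε,t) - (t²/2 - 1/√2)) dt = -ε/4 + o(ε) as ε → 0⁺, where V(ε,t) = t²/(2(1+εt²)^{1/2}) - 1/(√2 (1+εt²)^{1/4}). -/

import Mathlib

/-!
With `z = (1 + ε t²)^{1/4} ≥ 1` one has `V(ε,t) = t²/(2z²) - 1/(√2 z)` and `ε t² = z⁴ - 1`, so
second-order Taylor bounds for `z⁻²` and `z⁻¹`, which are polynomial inequalities in `z`, give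
`|V(ε,t) - V₀(t) + ε (t⁴/4 - t²/(4√2))| ≤ ε² (3/16 t⁶ + 5/(32√2) t⁴)`.
Since `φ₀²` is a normalized Gaussian of variance `1/√2`, its moments are `⟨t²⟩ = 1/√2` and
`⟨t⁴⟩ = 3/2`; hence the first-order term integrates to `-ε (3/8 - 1/8) = -ε/4` and the remainder
is `O(ε²)`.
-/

open MeasureTheory Asymptotics

/-- The Gaussian ground state `φ₀` of `Ĥ₀ = -∂_t² + t²/2 - 1/√2`. -/
noncomputable def phiZero7 (t : ℝ) : ℝ :=
  (Real.sqrt 2 * Real.pi) ^ (-(1 : ℝ) / 4) * Real.exp (-t ^ 2 / (2 * Real.sqrt 2))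

/-- The potential `V(ε,t)` of `Ĥ(ε)`. -/
noncomputable def hHatV7 (ε t : ℝ) : ℝ :=
  t ^ 2 / (2 * (1 + ε * t ^ 2) ^ ((1 : ℝ) / 2))
    - 1 / (Real.sqrt 2 * (1 + ε * t ^ 2) ^ ((1 : ℝ) / 4))

open Real

section GaussianMoments

variable {b : ℝ}

theorem integrable_pow_mul_exp_neg_mul_sq (hb : 0 < b) (n : ℕ) :
    Integrable fun x : ℝ => x ^ n * exp (-b * x ^ 2) := by
  simpa [rpow_natCast] using
    integrable_rpow_mul_exp_neg_mul_sq hb (s := n) (by linarith [n.cast_nonneg (α := ℝ)])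

/-- Integration by parts against `d/dx (x^(k+1) e^{-bx²})`. -/
theorem integral_pow_add_two_mul_exp_neg_mul_sq (hb : 0 < b) (k : ℕ) :
    ∫ x : ℝ, x ^ (k + 2) * exp (-b * x ^ 2)
      = (k + 1) / (2 * b) * ∫ x : ℝ, x ^ k * exp (-b * x ^ 2) := by
  have hderiv (x : ℝ) : HasDerivAt (fun x : ℝ => x ^ (k + 1) * exp (-b * x ^ 2))
      ((k + 1) * (x ^ k * exp (-b * x ^ 2)) - 2 * b * (x ^ (k + 2) * exp (-b * x ^ 2))) x := by
    have hexp : HasDerivAt (fun x : ℝ => -b * x ^ 2) (-b * (2 * x)) x := by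
      simpa using (hasDerivAt_pow 2 x).const_mul (-b)
    refine ((hasDerivAt_pow (k + 1) x).mul hexp.exp).congr_deriv ?_
    rw [Nat.add_sub_cancel]
    push_cast
    ring
  have hk := integrable_pow_mul_exp_neg_mul_sq hb k
  have hk2 := integrable_pow_mul_exp_neg_mul_sq hb (k + 2)
  have hzero := integral_eq_zero_of_hasDerivAt_of_integrable hderiv
    ((hk.const_mul _).sub (hk2.const_mul _)) (integrable_pow_mul_exp_neg_mul_sq hb (k + 1))
  rw [integral_sub (hk.const_mul _) (hk2.const_mul _), integral_const_mul,
    integral_const_mul] at hzero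
  rw [div_mul_eq_mul_div, eq_div_iff (by positivity)]
  linarith

theorem integral_sq_mul_exp_neg_mul_sq (hb : 0 < b) :
    ∫ x : ℝ, x ^ 2 * exp (-b * x ^ 2) = √(π / b) / (2 * b) := by
  have h := integral_pow_add_two_mul_exp_neg_mul_sq hb 0
  simp only [zero_add, pow_zero, one_mul, Nat.cast_zero, integral_gaussian] at h
  rw [h]
  ring

theorem integral_pow_four_mul_exp_neg_mul_sq (hb : 0 < b) :
    ∫ x : ℝ, x ^ 4 * exp (-b * x ^ 2) = 3 * √(π / b) / (4 * b ^ 2) := by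
  rw [integral_pow_add_two_mul_exp_neg_mul_sq hb 2, integral_sq_mul_exp_neg_mul_sq hb]
  field_simp
  norm_num

end GaussianMoments

theorem phiZero7_sq (t : ℝ) :
    phiZero7 t ^ 2 = (√(π / (√2)⁻¹))⁻¹ * exp (-(√2)⁻¹ * t ^ 2) := by
  have hpos : 0 < √2 * π := by positivity
  have hconst : ((√2 * π) ^ (-(1 : ℝ) / 4)) ^ 2 = (√(π / (√2)⁻¹))⁻¹ := by
    rw [div_inv_eq_mul, mul_comm π, ← rpow_natCast, ← rpow_mul hpos.le,
      sqrt_eq_rpow (√2 * π), ← rpow_neg hpos.le]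
    norm_num
  have hexp : exp (-t ^ 2 / (2 * √2)) ^ 2 = exp (-(√2)⁻¹ * t ^ 2) := by
    rw [← exp_nat_mul]
    field_simp
    ring_nf
  rw [phiZero7, mul_pow, hconst, hexp]

theorem phiZero7_sq_mul_pow (n : ℕ) (t : ℝ) :
    phiZero7 t ^ 2 * t ^ n = (√(π / (√2)⁻¹))⁻¹ * (t ^ n * exp (-(√2)⁻¹ * t ^ 2)) := by
  rw [phiZero7_sq]
  ring

theorem integrable_phiZero7_sq_mul_pow (n : ℕ) :
    Integrable fun t : ℝ => phiZero7 t ^ 2 * t ^ n := by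
  simp_rw [phiZero7_sq_mul_pow]
  exact (integrable_pow_mul_exp_neg_mul_sq (by positivity) n).const_mul _

theorem integral_phiZero7_sq_mul_sq : ∫ t : ℝ, phiZero7 t ^ 2 * t ^ 2 = √2 / 2 := by
  have hN : 0 < √(π / (√2)⁻¹) := by positivity
  simp_rw [phiZero7_sq_mul_pow, integral_const_mul,
    integral_sq_mul_exp_neg_mul_sq (inv_pos.mpr (sqrt_pos.mpr two_pos))]
  field_simp

theorem integral_phiZero7_sq_mul_pow_four : ∫ t : ℝ, phiZero7 t ^ 2 * t ^ 4 = 3 / 2 := by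
  have hN : 0 < √(π / (√2)⁻¹) := by positivity
  simp_rw [phiZero7_sq_mul_pow, integral_const_mul,
    integral_pow_four_mul_exp_neg_mul_sq (inv_pos.mpr (sqrt_pos.mpr two_pos))]
  field_simp
  norm_num

/-- Second-order Taylor bounds for `(1 + u)^(-1/2)` at `u = z⁴ - 1 ≥ 0`. -/
theorem inv_sq_taylor_bounds {z : ℝ} (hz : 1 ≤ z) :
    0 ≤ (z ^ 2)⁻¹ - 1 + (z ^ 4 - 1) / 2 ∧
      (z ^ 2)⁻¹ - 1 + (z ^ 4 - 1) / 2 ≤ 3 / 8 * (z ^ 4 - 1) ^ 2 := by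
  have hz0 : 0 < z := one_pos.trans_le hz
  have heq : (z ^ 2)⁻¹ - 1 + (z ^ 4 - 1) / 2 = (z ^ 2 - 1) ^ 2 * (z ^ 2 + 2) / (2 * z ^ 2) := by
    field_simp
    ring
  have hz2 : 1 ≤ z ^ 2 := one_le_pow₀ hz
  rw [heq, div_le_iff₀ (by positivity)]
  refine ⟨by positivity, ?_⟩
  nlinarith [sq_nonneg (z ^ 2 - 1), sq_nonneg ((z ^ 2 - 1) * (z ^ 2 + 1)),
    mul_nonneg (sq_nonneg (z ^ 2 - 1)) (sub_nonneg.mpr hz2)]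

/-- Second-order Taylor bounds for `(1 + u)^(-1/4)` at `u = z⁴ - 1 ≥ 0`. -/
theorem inv_taylor_bounds {z : ℝ} (hz : 1 ≤ z) :
    0 ≤ z⁻¹ - 1 + (z ^ 4 - 1) / 4 ∧ z⁻¹ - 1 + (z ^ 4 - 1) / 4 ≤ 5 / 32 * (z ^ 4 - 1) ^ 2 := by
  have hz0 : 0 < z := one_pos.trans_le hz
  have heq :
      z⁻¹ - 1 + (z ^ 4 - 1) / 4 = (z - 1) ^ 2 * (z ^ 3 + 2 * z ^ 2 + 3 * z + 4) / (4 * z) := by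
    field_simp
    ring
  rw [heq, div_le_iff₀ (by positivity)]
  refine ⟨by positivity, ?_⟩
  have hcubic : z ^ 3 + 2 * z ^ 2 + 3 * z + 4 ≤ 5 / 8 * z * (z ^ 3 + z ^ 2 + z + 1) ^ 2 := by
    nlinarith [pow_le_pow_right₀ hz (show 2 ≤ 7 by norm_num),
      pow_le_pow_right₀ hz (show 2 ≤ 6 by norm_num), pow_le_pow_right₀ hz (show 2 ≤ 5 by norm_num),
      pow_le_pow_right₀ hz (show 2 ≤ 4 by norm_num), pow_le_pow_right₀ hz (show 2 ≤ 3 by norm_num)]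
  nlinarith [mul_le_mul_of_nonneg_left hcubic (sq_nonneg (z - 1))]

theorem abs_hHatV7_sub_taylor_le {ε : ℝ} (hε : 0 ≤ ε) (t : ℝ) :
    |hHatV7 ε t - (t ^ 2 / 2 - 1 / √2) + ε * (t ^ 4 / 4 - t ^ 2 / (4 * √2))|
      ≤ ε ^ 2 * (3 / 16 * t ^ 6 + 5 / (32 * √2) * t ^ 4) := by
  have hbase : 1 ≤ 1 + ε * t ^ 2 := le_add_of_nonneg_right (by positivity)
  set z := (1 + ε * t ^ 2) ^ (1 / 4 : ℝ) with hz
  have hz1 : 1 ≤ z := one_le_rpow hbase (by norm_num)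
  have hpow (n : ℕ) : z ^ n = (1 + ε * t ^ 2) ^ ((n : ℝ) / 4) := by
    rw [hz, ← rpow_natCast ((1 + ε * t ^ 2) ^ (1 / 4 : ℝ)) n,
      ← rpow_mul (zero_le_one.trans hbase)]
    ring_nf
  have hu : ε * t ^ 2 = z ^ 4 - 1 := by
    rw [hpow 4]
    norm_num
  have hV : hHatV7 ε t = t ^ 2 / 2 * (z ^ 2)⁻¹ - (√2)⁻¹ * z⁻¹ := by
    rw [hHatV7, ← hz, hpow 2]
    norm_num
    ring
  obtain ⟨hA₀, hA⟩ := inv_sq_taylor_bounds hz1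
  obtain ⟨hB₀, hB⟩ := inv_taylor_bounds hz1
  have hlhs : hHatV7 ε t - (t ^ 2 / 2 - 1 / √2) + ε * (t ^ 4 / 4 - t ^ 2 / (4 * √2))
      = t ^ 2 / 2 * ((z ^ 2)⁻¹ - 1 + (z ^ 4 - 1) / 2) - (√2)⁻¹ * (z⁻¹ - 1 + (z ^ 4 - 1) / 4) := by
    rw [hV, ← hu]
    ring
  have hrhs : ε ^ 2 * (3 / 16 * t ^ 6 + 5 / (32 * √2) * t ^ 4)
      = t ^ 2 / 2 * (3 / 8 * (z ^ 4 - 1) ^ 2) + (√2)⁻¹ * (5 / 32 * (z ^ 4 - 1) ^ 2) := by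
    rw [← hu]
    ring
  have ht : 0 ≤ t ^ 2 / 2 := by positivity
  have hs : 0 ≤ (√2)⁻¹ := by positivity
  rw [hlhs, hrhs, abs_le]
  constructor
  · linarith [mul_nonneg ht hA₀, mul_le_mul_of_nonneg_left hB hs,
      mul_nonneg ht (sq_nonneg (z ^ 4 - 1))]
  · linarith [mul_le_mul_of_nonneg_left hA ht, mul_nonneg hs hB₀,
      mul_nonneg hs (sq_nonneg (z ^ 4 - 1))]

@[fun_prop]
theorem measurable_hHatV7 (ε : ℝ) : Measurable (hHatV7 ε) := by
  unfold hHatV7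
  fun_prop

@[fun_prop]
theorem measurable_phiZero7 : Measurable phiZero7 := by
  unfold phiZero7
  fun_prop

theorem abs_integral_add_mul_integral_le {α : Type*} [MeasurableSpace α] {μ : Measure α}
    {f g h : α → ℝ} {c : ℝ} (hf : AEStronglyMeasurable f μ) (hg : Integrable g μ)
    (hh : Integrable h μ) (hfg : ∀ x, |f x + c * g x| ≤ h x) :
    |(∫ x, f x ∂μ) + c * ∫ x, g x ∂μ| ≤ ∫ x, h x ∂μ := by
  have hsum : Integrable (fun x => f x + c * g x) μ :=
    hh.mono' (hf.add (hg.const_mul c).aestronglyMeasurable) (ae_of_all _ hfg)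
  have hf_int : Integrable f μ := by
    simpa [Pi.sub_def] using hsum.sub (hg.const_mul c)
  rw [← integral_const_mul, ← integral_add hf_int (hg.const_mul c)]
  exact norm_integral_le_of_norm_le hh (ae_of_all _ fun x => (norm_eq_abs _).trans_le (hfg x))

theorem abs_integral_phiZero7_sq_mul_potential_shift_add_le {ε : ℝ} (hε : 0 ≤ ε) :
    |(∫ t : ℝ, phiZero7 t ^ 2 * (hHatV7 ε t - (t ^ 2 / 2 - 1 / √2))) + ε / 4|
      ≤ ε ^ 2 * ∫ t : ℝ, phiZero7 t ^ 2 * (3 / 16 * t ^ 6 + 5 / (32 * √2) * t ^ 4) := by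
  have hint (n : ℕ) := integrable_phiZero7_sq_mul_pow n
  have hfirst : ∫ t : ℝ, phiZero7 t ^ 2 * (t ^ 4 / 4 - t ^ 2 / (4 * √2)) = 1 / 4 := by
    simp_rw [mul_sub, mul_div_assoc', integral_sub ((hint 4).div_const _) ((hint 2).div_const _),
      integral_div, integral_phiZero7_sq_mul_pow_four, integral_phiZero7_sq_mul_sq]
    field_simp
    norm_num
  have hfirst_int : Integrable fun t : ℝ => phiZero7 t ^ 2 * (t ^ 4 / 4 - t ^ 2 / (4 * √2)) := by
    simp_rw [mul_sub, mul_div_assoc']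
    exact ((hint 4).div_const _).sub ((hint 2).div_const _)
  have hsecond_int :
      Integrable fun t : ℝ => phiZero7 t ^ 2 * (3 / 16 * t ^ 6 + 5 / (32 * √2) * t ^ 4) := by
    simp_rw [mul_add, mul_left_comm (phiZero7 _ ^ 2)]
    exact ((hint 6).const_mul _).add ((hint 4).const_mul _)
  rw [← integral_const_mul, show ε / 4 = ε * (1 / 4) by ring, ← hfirst]
  refine abs_integral_add_mul_integral_le (by fun_prop) hfirst_int (hsecond_int.const_mul _)
    fun t => ?_
  calc _ = |phiZero7 t ^ 2 *
        (hHatV7 ε t - (t ^ 2 / 2 - 1 / √2) + ε * (t ^ 4 / 4 - t ^ 2 / (4 * √2)))| := by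
        ring_nf
    _ = phiZero7 t ^ 2 *
        |hHatV7 ε t - (t ^ 2 / 2 - 1 / √2) + ε * (t ^ 4 / 4 - t ^ 2 / (4 * √2))| := by
        rw [abs_mul, abs_sq]
    _ ≤ phiZero7 t ^ 2 * (ε ^ 2 * (3 / 16 * t ^ 6 + 5 / (32 * √2) * t ^ 4)) :=
        mul_le_mul_of_nonneg_left (abs_hHatV7_sub_taylor_le hε t) (sq_nonneg _)
    _ = _ := by ring

theorem phiZero_expectation_asymptotics :
    (fun ε : ℝ =>
        (∫ t : ℝ, phiZero7 t ^ 2 * (hHatV7 ε t - (t ^ 2 / 2 - 1 / Real.sqrt 2)))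
          + ε / 4)
      =o[nhdsWithin 0 (Set.Ioi 0)] fun ε : ℝ => ε := by
  refine IsBigO.trans_isLittleO ?_ ((isLittleO_pow_id one_lt_two).mono nhdsWithin_le_nhds)
  refine .of_bound (∫ t : ℝ, phiZero7 t ^ 2 * (3 / 16 * t ^ 6 + 5 / (32 * √2) * t ^ 4)) ?_
  filter_upwards [self_mem_nhdsWithin] with ε hε
  rw [norm_eq_abs, norm_of_nonneg (sq_nonneg ε), mul_comm]
  exact abs_integral_phiZero7_sq_mul_potential_shift_add_le (le_of_lt hε)
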